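/- arXiv:2111.06710 — 8 statements merged into one kernel-verified Lean document; each statement's English description precedes it below -/
import Mathlib

section
/- If G is a graph on n ≥ 3 vertices with degree sequence d_1 ≤ d_2 ≤ ... ≤ d_n such that for all k < n/2 we have d_k > k, then G contains a Hamiltonian cycle. -/
/-!
Pass to an edge-maximal non-Hamiltonian supergraph `H` of `G`; Pósa's condition, read as
"fewer than `k` vertices have degree at most `k`", survives adding edges. For non-adjacent
`u ≠ v` the graph `H + uv` is Hamiltonian, so `H` has a Hamiltonian `u`–`v` path, and Ore's
crossing argument gives `deg u + deg v < n`. Now take a non-adjacent pair `a, b` with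
`deg a ≤ deg b` and maximal degree sum. Every vertex outside the closed neighbourhood of `b`
has degree at most `k = deg a`, there are `n - 1 - deg b ≥ k` of them, and `2k < n`:
this contradicts Pósa's condition.
-/

open Finset

namespace SimpleGraph

variable {V : Type*} {G : SimpleGraph V} {u v : V}

lemma mem_edgeSet_of_mem_edgeSet_sup_edge {e : Sym2 V} (he : e ∈ (G ⊔ edge u v).edgeSet)
    (hne : e ≠ s(u, v)) : e ∈ G.edgeSet := by
  rw [edgeSet_sup, edgeSet_edge] at he
  rcases he with he | ⟨rfl, -⟩
  · exact he
  · exact absurd rfl hne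

namespace Walk

lemma penultimate_tail {p : G.Walk u v} (hp : 1 < p.length) :
    p.tail.penultimate = p.penultimate := by
  simp only [penultimate, tail, drop_getVert, drop_length]
  congr 1
  omega

lemma IsCycle.eq_snd_or_eq_penultimate_of_mem_edges {p : G.Walk u u} (hp : p.IsCycle)
    (he : s(u, v) ∈ p.edges) : v = p.snd ∨ v = p.penultimate := by
  rw [← p.cons_tail_eq hp.not_nil, edges_cons, List.mem_cons] at he
  rcases he with he | he
  · exact .inl (Sym2.congr_right.mp he)
  · have := hp.three_le_length
    exact .inr (penultimate_tail (p := p) (by omega) ▸ hp.isPath_tail.eq_penultimate_of_mem_edges he)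

section DecidableEq

variable [DecidableEq V]

lemma IsHamiltonian.of_perm_support {G' : SimpleGraph V} {u' v' : V} {p : G.Walk u v}
    {q : G'.Walk u' v'} (hp : p.IsHamiltonian) (h : q.support.Perm p.support) :
    q.IsHamiltonian :=
  fun w => (h.count_eq w).trans (hp w)

lemma IsHamiltonianCycle.exists_isHamiltonian_of_snd_eq {c : (G ⊔ edge u v).Walk u u}
    (hc : c.IsHamiltonianCycle) (hsnd : c.snd = v) : ∃ p : G.Walk u v, p.IsHamiltonian := by
  have hnot : s(u, c.snd) ∉ c.tail.edges := by
    have := hc.edges_nodup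
    rw [← c.cons_tail_eq hc.not_nil, edges_cons, List.nodup_cons] at this
    exact this.1
  have hsub : ∀ e ∈ c.tail.edges, e ∈ G.edgeSet := fun e he =>
    mem_edgeSet_of_mem_edgeSet_sup_edge (c.tail.edges_subset_edgeSet he)
      (by rintro rfl; exact hnot (by rwa [show s(u, c.snd) = s(u, v) by rw [hsnd]]))
  refine ⟨((c.tail.transfer G hsub).reverse).copy rfl hsnd,
    hc.isHamiltonian_tail.of_perm_support ?_⟩
  rw [support_copy, support_reverse, support_transfer]
  exact List.reverse_perm _

variable [Fintype V]

lemma IsHamiltonianCycle.reverse {p : G.Walk u u} (hp : p.IsHamiltonianCycle) :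
    p.reverse.IsHamiltonianCycle :=
  isHamiltonianCycle_iff_isCycle_and_length_eq.mpr ⟨hp.isCycle.reverse, by simp [hp.length_eq]⟩

lemma IsHamiltonian.isHamiltonian_of_adj {p : G.Walk u v} (hp : p.IsHamiltonian)
    (hvu : G.Adj v u) (h3 : 3 ≤ Fintype.card V) : G.IsHamiltonian := by
  have hlen := hp.length_eq
  have hcycle : (cons hvu p).IsCycle := by
    refine (cons_isCycle_iff p hvu).mpr ⟨hp.isPath, fun he => ?_⟩
    have := hp.isPath.length_eq_one_of_mem_edges (Sym2.eq_swap ▸ he)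
    omega
  exact fun _ => ⟨v, cons hvu p,
    isHamiltonianCycle_iff_isCycle_and_length_eq.mpr ⟨hcycle, by rw [length_cons]; omega⟩⟩

lemma IsHamiltonian.isHamiltonian_of_crossing {p : G.Walk u v} (hp : p.IsHamiltonian)
    (h3 : 3 ≤ Fintype.card V) {i : ℕ} (hi : i < p.length)
    (hu : G.Adj u (p.getVert (i + 1))) (hv : G.Adj v (p.getVert i)) : G.IsHamiltonian := by
  -- `u → ⋯ → pᵢ → v → ⋯ → pᵢ₊₁`, closed up by the edge `pᵢ₊₁ u`
  let q := (p.take i).append (cons hv.symm (p.drop (i + 1)).reverse)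
  have hq : q.IsHamiltonian := by
    refine hp.of_perm_support ?_
    have hsplit := List.take_append_drop (i + 1) p.support
    simp only [q, support_append, support_take, support_cons, support_reverse, List.tail_cons,
      drop_support_eq_support_drop_min, min_eq_left (show i + 1 ≤ p.length by omega)]
    conv_rhs => rw [← hsplit]
    exact (List.reverse_perm _).append_left _
  exact hq.isHamiltonian_of_adj hu.symm h3

lemma IsHamiltonian.card_filter_getVert {p : G.Walk u v} (hp : p.IsHamiltonian)
    (P : V → Prop) [DecidablePred P] :
    #{i ∈ range (p.length + 1) | P (p.getVert i)} = #{w | P w} := by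
  refine card_nbij p.getVert (fun i hi => by simp_all) (fun i hi j hj hij => ?_) fun w hw => ?_
  · simp only [coe_filter, mem_range, Set.mem_ofPred_eq] at hi hj
    exact hp.isPath.getVert_injOn (by simp only [Set.mem_ofPred_eq]; omega)
      (by simp only [Set.mem_ofPred_eq]; omega) hij
  · obtain ⟨i, rfl, hi⟩ := mem_support_iff_exists_getVert.mp (hp.mem_support w)
    exact ⟨i, by simp_all, rfl⟩

lemma IsHamiltonian.degree_add_degree_lt [DecidableRel G.Adj] {p : G.Walk u v}
    (hp : p.IsHamiltonian) (h3 : 3 ≤ Fintype.card V) (hG : ¬G.IsHamiltonian) :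
    G.degree u + G.degree v < Fintype.card V := by
  set A := {i ∈ range (p.length + 1) | G.Adj u (p.getVert i)}
  set B := {i ∈ range (p.length + 1) | G.Adj v (p.getVert i)}
  have hA : #A = G.degree u := by
    rw [hp.card_filter_getVert, ← card_neighborFinset_eq_degree, neighborFinset_eq_filter]
  have hB : #B = G.degree v := by
    rw [hp.card_filter_getVert, ← card_neighborFinset_eq_degree, neighborFinset_eq_filter]
  have hA_sub : A ⊆ Icc 1 p.length := fun i hi => by
    obtain ⟨hi, hadj⟩ := mem_filter.mp hi
    have : i ≠ 0 := by rintro rfl; simp at hadj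
    simp only [mem_range, mem_Icc] at hi ⊢
    omega
  have hB_sub : B.image (· + 1) ⊆ Icc 1 p.length := by
    simp only [image_subset_iff]
    intro i hi
    obtain ⟨hi, hadj⟩ := mem_filter.mp hi
    have : i ≠ p.length := by rintro rfl; simp at hadj
    simp only [mem_range, mem_Icc] at hi ⊢
    omega
  have hdisj : Disjoint A (B.image (· + 1)) := by
    refine Finset.disjoint_left.mpr fun j hjA hjB => ?_
    obtain ⟨i, hiB, rfl⟩ := mem_image.mp hjB
    obtain ⟨hi, hu⟩ := mem_filter.mp hjA
    exact hG (hp.isHamiltonian_of_crossing h3 (by simpa using hi) hu (mem_filter.mp hiB).2)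
  calc G.degree u + G.degree v = #(A ∪ B.image (· + 1)) := by
        rw [card_union_of_disjoint hdisj, card_image_of_injective _ (add_left_injective 1), hA, hB]
    _ ≤ #(Icc 1 p.length) := card_le_card (union_subset hA_sub hB_sub)
    _ < Fintype.card V := by rw [Nat.card_Icc, hp.length_eq]; omega

end DecidableEq

end Walk

section Fintype

variable [Fintype V]

def PosaCondition (G : SimpleGraph V) [DecidableRel G.Adj] : Prop :=
  ∀ k, 1 ≤ k → 2 * k < Fintype.card V → #{v | G.degree v ≤ k} < k

lemma PosaCondition.mono [DecidableRel G.Adj] {H : SimpleGraph V} [DecidableRel H.Adj]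
    (hGH : G ≤ H) (hG : G.PosaCondition) : H.PosaCondition := fun k hk hkn =>
  (card_le_card fun w hw => by
    simp only [mem_filter, mem_univ, true_and] at hw ⊢
    exact (degree_le_of_le hGH).trans hw).trans_lt (hG k hk hkn)

lemma posaCondition_of_monotone_degree {n : ℕ} [DecidableRel G.Adj] {d : Fin n → ℕ}
    (σ : Fin n ≃ V) (hmono : Monotone d) (hdeg : ∀ i, G.degree (σ i) = d i)
    (hposa : ∀ i : Fin n, 2 * (i.val + 1) < n → i.val + 1 < d i) : G.PosaCondition := by
  intro k hk hkn
  rw [← Fintype.card_congr σ, Fintype.card_fin] at hkn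
  by_contra! hcard
  replace hcard : k ≤ #{i | d i ≤ k} := hcard.trans_eq (card_equiv σ (by simp [hdeg])).symm
  set j : Fin n := ⟨k - 1, by omega⟩
  obtain ⟨i, hi, hji⟩ : ∃ i, d i ≤ k ∧ j ≤ i := by
    by_contra! h
    have := card_le_card (show ({i | d i ≤ k} : Finset (Fin n)) ⊆ Iio j from
      fun i hi => by simpa using h i (by simpa using hi))
    simp [j] at this
    omega
  have := hposa j (by simp only [j]; omega)
  have := hmono hji
  simp only [j] at *
  omega

variable [DecidableEq V]

lemma isHamiltonian_top (h3 : 3 ≤ Fintype.card V) : (⊤ : SimpleGraph V).IsHamiltonian := by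
  have : Nonempty V := Fintype.card_pos_iff.mp (by omega)
  have hne : (univ : Finset V).toList ≠ [] := by simp [univ_nonempty.ne_empty]
  have hnodup := nodup_toList (univ : Finset V)
  let p : (⊤ : SimpleGraph V).Walk _ _ :=
    Walk.ofSupport _ hne (hnodup.imp fun h => (top_adj _ _).mpr h).isChain
  have hp : p.IsHamiltonian :=
    (Walk.IsPath.mk' (by simpa [p] using hnodup)).isHamiltonian_of_mem (by simp [p])
  refine hp.isHamiltonian_of_adj (fun h => ?_) h3
  obtain ⟨x, hx⟩ := (hnodup.head_eq_getLast_iff hne).mp h.symm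
  have := congrArg List.length hx
  simp only [length_toList, card_univ, List.length_singleton] at this
  omega

lemma exists_isHamiltonian_of_isHamiltonian_sup_edge (hG : ¬G.IsHamiltonian)
    (hG' : (G ⊔ edge u v).IsHamiltonian) (huv : u ≠ v) : ∃ p : G.Walk u v, p.IsHamiltonian := by
  have : Nontrivial V := ⟨u, v, huv⟩
  obtain ⟨c, hc⟩ := hG'.exists_isHamiltonianCycle u
  have he : s(u, v) ∈ c.edges := by
    by_contra he
    refine hG fun _ => ⟨u, c.transfer G fun e he' => ?_, ?_⟩
    · exact mem_edgeSet_of_mem_edgeSet_sup_edge (c.edges_subset_edgeSet he')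
        (by rintro rfl; exact he he')
    · exact Walk.isHamiltonianCycle_iff_isCycle_and_length_eq.mpr
        ⟨hc.isCycle.transfer _, by simp [hc.length_eq]⟩
  rcases hc.isCycle.eq_snd_or_eq_penultimate_of_mem_edges he with h | h
  · exact hc.exists_isHamiltonian_of_snd_eq h.symm
  · exact hc.reverse.exists_isHamiltonian_of_snd_eq (by rw [Walk.snd_reverse]; exact h.symm)

lemma degree_add_degree_lt_of_maximal [DecidableRel G.Adj]
    (hmax : Maximal (fun H : SimpleGraph V => ¬H.IsHamiltonian) G) (h3 : 3 ≤ Fintype.card V)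
    (huv : u ≠ v) (hnadj : ¬G.Adj u v) : G.degree u + G.degree v < Fintype.card V := by
  have hG' : (G ⊔ edge u v).IsHamiltonian := by
    by_contra h
    exact (G.lt_sup_edge _ _ huv hnadj).not_ge (hmax.2 h le_sup_left)
  obtain ⟨p, hp⟩ := exists_isHamiltonian_of_isHamiltonian_sup_edge hmax.1 hG' huv
  exact hp.degree_add_degree_lt h3 hmax.1

variable [DecidableRel G.Adj]

lemma PosaCondition.exists_not_adj_degree_lt (hG : G.PosaCondition) (h3 : 3 ≤ Fintype.card V)
    {a b : V} (hab : a ≠ b) (hnadj : ¬G.Adj a b) (hle : G.degree a ≤ G.degree b)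
    (hlt : G.degree a + G.degree b < Fintype.card V) :
    ∃ w, w ≠ b ∧ ¬G.Adj w b ∧ G.degree a < G.degree w := by
  by_contra! hmax
  -- Pósa's condition starts at `k = 1`; since `a ∈ S`, also `1 ≤ #S`.
  set k := max (G.degree a) 1
  set S := (insert b (G.neighborFinset b))ᶜ
  have hS : #S = Fintype.card V - 1 - G.degree b := by
    rw [card_compl, card_insert_of_notMem (by simp), card_neighborFinset_eq_degree]
    omega
  have haS : a ∈ S := by simp [S, hab, G.adj_comm b a, hnadj]
  have hS_sub : S ⊆ ({w | G.degree w ≤ k} : Finset V) := fun w hw => by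
    simp only [S, mem_compl, mem_insert, mem_neighborFinset, not_or] at hw
    simp only [mem_filter, mem_univ, true_and]
    exact le_max_of_le_left (hmax w hw.1 fun h => hw.2 h.symm)
  have hkS : k ≤ #S := max_le (by omega) (card_pos.mpr ⟨a, haS⟩)
  exact (hG k (le_max_right _ _) (by omega)).not_ge (hkS.trans (card_le_card hS_sub))

theorem PosaCondition.isHamiltonian (hG : G.PosaCondition) (h3 : 3 ≤ Fintype.card V) :
    G.IsHamiltonian := by
  classical
  by_contra hnot
  obtain ⟨H, hGH, hmax⟩ :=
    Finite.exists_le_maximal (p := fun H : SimpleGraph V => ¬H.IsHamiltonian) hnot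
  have hH : H.PosaCondition := hG.mono hGH
  obtain ⟨a, b, hab, hnadj⟩ := (ne_top_iff_exists_not_adj (G := H)).mp
    fun h => hmax.1 (h ▸ isHamiltonian_top h3)
  obtain ⟨⟨a, b⟩, hmem, hbest⟩ :=
    exists_max_image ({p : V × V | p.1 ≠ p.2 ∧ ¬H.Adj p.1 p.2} : Finset (V × V))
      (fun p => H.degree p.1 + H.degree p.2) ⟨(a, b), by simp [hab, hnadj]⟩
  simp only [mem_filter, mem_univ, true_and, and_imp, Prod.forall] at hmem hbest
  obtain ⟨hab, hnadj⟩ := hmem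
  wlog hle : H.degree a ≤ H.degree b generalizing a b
  · exact this b a (fun x y hxy hxy' => (hbest x y hxy hxy').trans_eq (add_comm _ _))
      hab.symm (fun h => hnadj h.symm) (by omega)
  obtain ⟨w, hwb, hwadj, hw⟩ := hH.exists_not_adj_degree_lt h3 hab hnadj hle
    (degree_add_degree_lt_of_maximal hmax h3 hab hnadj)
  have := hbest w b hwb hwadj
  omega

end Fintype

end SimpleGraph

/-- Pósa's theorem: if the nondecreasing degree sequence `d` of a graph `G` on `n ≥ 3`
vertices satisfies `d_k > k` for all `k < n/2` (1-indexed), then `G` is Hamiltonian. -/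
theorem posa_hamiltonian {n : ℕ} (hn : 3 ≤ n) (G : SimpleGraph (Fin n))
    [DecidableRel G.Adj] (d : Fin n → ℕ) (σ : Fin n ≃ Fin n)
    (hmono : Monotone d) (hdeg : ∀ i, G.degree (σ i) = d i)
    (hposa : ∀ i : Fin n, 2 * (i.val + 1) < n → i.val + 1 < d i) :
    G.IsHamiltonian :=
  (SimpleGraph.posaCondition_of_monotone_degree σ hmono hdeg hposa).isHamiltonian
    (by simpa using hn)
end

section
/- If G is a graph on n ≥ 3 vertices with minimum degree at least n/2, then G contains a Hamiltonian cycle. -/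
/-!
Take a longest path `P = v₀ … v_k`. Every neighbour of either end lies on `P`, so the indices
`i < k` with `v₀ ~ v_{i+1}` and those with `v_k ~ v_i` number at least `n/2` each; as `k < n`, some
index `i` is of both kinds, and `v₀ … v_i v_k v_{k-1} … v_{i+1} v₀` is a cycle through the vertex
set of `P`. A vertex off this cycle with a neighbour on it would start a path longer than `P`,
while a vertex with no neighbour on it has degree at most `n - k - 2 < n/2`. Hence `P` covers
every vertex and the cycle is Hamiltonian.
-/

open Finset

namespace SimpleGraph

variable {V : Type*} {G : SimpleGraph V} {u v : V}

namespace Walk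

def IsLongestPath (p : G.Walk u v) : Prop :=
  p.IsPath ∧ ∀ ⦃x y : V⦄ (q : G.Walk x y), q.IsPath → q.length ≤ p.length

theorem exists_isLongestPath [Fintype V] [Nonempty V] (G : SimpleGraph V) :
    ∃ (u v : V) (p : G.Walk u v), p.IsLongestPath := by
  classical
  let HasPathOfLength (ℓ : ℕ) : Prop := ∃ (u v : V) (p : G.Walk u v), p.IsPath ∧ p.length = ℓ
  obtain ⟨u, v, p, hp, hlen⟩ := Nat.findGreatest_spec (P := HasPathOfLength) (Nat.zero_le _)
    ⟨_, _, nil (u := Classical.arbitrary V), .nil, rfl⟩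
  refine ⟨u, v, p, hp, fun x y q hq => ?_⟩
  rw [hlen]
  exact Nat.le_findGreatest hq.length_lt.le ⟨x, y, q, hq, rfl⟩

theorem IsLongestPath.reverse {p : G.Walk u v} (hp : p.IsLongestPath) : p.reverse.IsLongestPath :=
  ⟨hp.1.reverse, fun _ _ q hq => (length_reverse p).symm ▸ hp.2 q hq⟩

theorem IsLongestPath.mem_support_of_adj_start {p : G.Walk u v} (hp : p.IsLongestPath) {w : V}
    (h : G.Adj u w) : w ∈ p.support := by
  by_contra hw
  have := hp.2 _ (hp.1.cons hw (h := h.symm))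
  rw [length_cons] at this
  omega

theorem IsLongestPath.mem_support_of_adj_end {p : G.Walk u v} (hp : p.IsLongestPath) {w : V}
    (h : G.Adj v w) : w ∈ p.support := by
  simpa using hp.reverse.mem_support_of_adj_start h

theorem IsCycle.exists_isPath_length_eq_of_adj {c : G.Walk u u} (hc : c.IsCycle) {b w : V}
    (hb : b ∈ c.support) (hw : w ∉ c.support) (h : G.Adj w b) :
    ∃ (x : V) (q : G.Walk w x), q.IsPath ∧ q.length = c.length := by
  classical
  have hd : (c.rotate b hb).IsCycle := hc.rotate hb
  refine ⟨_, cons h (c.rotate b hb).tail.reverse, hd.isPath_tail.reverse.cons ?_, ?_⟩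
  · rw [support_reverse, List.mem_reverse, support_tail_of_not_nil _ hd.not_nil]
    exact fun hmem => hw ((mem_support_rotate_iff c b hb).1 (List.mem_of_mem_tail hmem))
  · rw [length_cons, length_reverse, length_tail_add_one hd.not_nil, length_rotate]

theorem IsLongestPath.not_adj_of_isCycle {p : G.Walk u v} (hp : p.IsLongestPath) {a : V}
    {c : G.Walk a a} (hc : c.IsCycle) (hlen : c.length = p.length + 1)
    (hsupp : ∀ z, z ∈ c.support ↔ z ∈ p.support) {w b : V} (hw : w ∉ p.support)
    (hb : b ∈ p.support) : ¬G.Adj w b := fun hwb => by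
  obtain ⟨x, q, hq, hqlen⟩ :=
    hc.exists_isPath_length_eq_of_adj ((hsupp b).2 hb) (mt (hsupp w).1 hw) hwb
  have := hp.2 q hq
  omega

theorem IsPath.exists_isCycle_of_crossing {x y : V} {q : G.Walk u x} {r : G.Walk y v}
    {hxy : G.Adj x y} (hp : (q.append (cons hxy r)).IsPath)
    (h2 : 2 ≤ (q.append (cons hxy r)).length) (huy : G.Adj u y) (hvx : G.Adj v x) :
    ∃ c : G.Walk u u, c.IsCycle ∧ c.length = (q.append (cons hxy r)).length + 1 ∧
      ∀ z, z ∈ c.support ↔ z ∈ (q.append (cons hxy r)).support := by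
  set d : G.Walk y u := r.append (cons hvx q.reverse)
  have hsupp : d.support.Perm (q.append (cons hxy r)).support := by
    simp only [d, support_append, support_cons, List.tail_cons, support_reverse]
    exact ((List.reverse_perm _).append_left _).trans List.perm_append_comm
  have hd : d.IsPath := IsPath.mk' (hsupp.nodup_iff.2 hp.support_nodup)
  have hlen : d.length = (q.append (cons hxy r)).length := by
    simp only [d, length_append, length_cons, length_reverse]
    omega
  refine ⟨cons huy d, ?_, by rw [length_cons, hlen], fun z => ?_⟩
  · exact isCycle_iff_isPath_tail_and_le_length.2 ⟨by simpa using hd, by rw [length_cons]; omega⟩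
  · rw [support_cons, List.mem_cons, hsupp.mem_iff]
    exact or_iff_right_of_imp (by rintro rfl; exact start_mem_support _)

theorem IsPath.exists_isCycle_of_adj_getVert {p : G.Walk u v} (hp : p.IsPath) (h2 : 2 ≤ p.length)
    {i : ℕ} (hi : i < p.length) (hu : G.Adj u (p.getVert (i + 1)))
    (hv : G.Adj v (p.getVert i)) :
    ∃ c : G.Walk u u, c.IsCycle ∧ c.length = p.length + 1 ∧ ∀ z, z ∈ c.support ↔ z ∈ p.support := by
  obtain ⟨y, hxy, r, hr⟩ := not_nil_iff.1 (by rw [nil_drop_iff]; omega : ¬(p.drop i).Nil)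
  have hy : p.getVert (i + 1) = y := by
    simpa [drop_getVert] using congrArg (getVert · 1) hr
  have hsplit : (p.take i).append (cons hxy r) = p := by rw [← hr, append_take_drop_eq]
  have key := IsPath.exists_isCycle_of_crossing (by rwa [hsplit]) (by rwa [hsplit]) (hy ▸ hu) hv
  rwa [hsplit] at key

theorem degree_le_card_filter_adj_getVert {w : V} [Fintype (G.neighborSet w)]
    [DecidableRel G.Adj] (p : G.Walk u v) (hw : ∀ y, G.Adj w y → y ∈ p.support) (f : ℕ → ℕ)
    (hf : ∀ j ≤ p.length, G.Adj w (p.getVert j) → ∃ i < p.length, f i = j) :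
    G.degree w ≤ #{i ∈ range p.length | G.Adj w (p.getVert (f i))} := by
  classical
  rw [← card_neighborFinset_eq_degree]
  refine (card_le_card fun y hy => ?_).trans (card_image_le (f := fun i => p.getVert (f i)))
  rw [mem_neighborFinset] at hy
  obtain ⟨j, rfl, hj⟩ := mem_support_iff_exists_getVert.1 (hw y hy)
  obtain ⟨i, hi, rfl⟩ := hf j hj hy
  exact mem_image.2 ⟨i, mem_filter.2 ⟨mem_range.2 hi, hy⟩, rfl⟩

theorem degree_le_card_filter_adj_getVert_succ [Fintype (G.neighborSet u)] [DecidableRel G.Adj]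
    (p : G.Walk u v) (hu : ∀ y, G.Adj u y → y ∈ p.support) :
    G.degree u ≤ #{i ∈ range p.length | G.Adj u (p.getVert (i + 1))} := by
  refine degree_le_card_filter_adj_getVert p hu (· + 1) fun j hj hadj => ⟨j - 1, ?_, ?_⟩ <;>
  · have : j ≠ 0 := by rintro rfl; exact hadj.ne (getVert_zero p).symm
    omega

theorem degree_le_card_filter_adj_getVert_end [Fintype (G.neighborSet v)] [DecidableRel G.Adj]
    (p : G.Walk u v) (hv : ∀ y, G.Adj v y → y ∈ p.support) :
    G.degree v ≤ #{i ∈ range p.length | G.Adj v (p.getVert i)} := by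
  refine degree_le_card_filter_adj_getVert p hv id fun j hj hadj => ⟨j, ?_, rfl⟩
  have : j ≠ p.length := by rintro rfl; exact hadj.ne (getVert_length p).symm
  omega

theorem degree_le_length_of_forall_adj_mem_support [Fintype (G.neighborSet u)]
    [DecidableRel G.Adj] (p : G.Walk u v) (hu : ∀ y, G.Adj u y → y ∈ p.support) :
    G.degree u ≤ p.length :=
  (degree_le_card_filter_adj_getVert_succ p hu).trans <| (card_filter_le _ _).trans_eq (card_range _)

theorem exists_adj_getVert_succ_and_adj_getVert [Fintype (G.neighborSet u)]
    [Fintype (G.neighborSet v)] [DecidableRel G.Adj] (p : G.Walk u v)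
    (hu : ∀ y, G.Adj u y → y ∈ p.support) (hv : ∀ y, G.Adj v y → y ∈ p.support)
    (h : p.length < G.degree u + G.degree v) :
    ∃ i < p.length, G.Adj u (p.getVert (i + 1)) ∧ G.Adj v (p.getVert i) := by
  have hS := degree_le_card_filter_adj_getVert_succ p hu
  have hT := degree_le_card_filter_adj_getVert_end p hv
  set S := {i ∈ range p.length | G.Adj u (p.getVert (i + 1))}
  set T := {i ∈ range p.length | G.Adj v (p.getVert i)}
  have hST : #(S ∪ T) ≤ p.length :=
    (card_le_card (union_subset (filter_subset _ _) (filter_subset _ _))).trans_eq (card_range _)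
  obtain ⟨i, hi⟩ : (S ∩ T).Nonempty := by
    rw [← card_pos]
    have := card_union_add_card_inter S T
    omega
  simp only [S, T, mem_inter, mem_filter, mem_range] at hi
  exact ⟨i, hi.1.1, hi.1.2, hi.2.2⟩

end Walk

theorem degree_add_card_lt_card_of_forall_not_adj [Fintype V] [DecidableRel G.Adj]
    (s : Finset V) {w : V} (hw : w ∉ s) (h : ∀ x ∈ s, ¬G.Adj w x) :
    G.degree w + #s < Fintype.card V := by
  classical
  have hdisj : Disjoint (G.neighborFinset w) (insert w s) := by
    refine Finset.disjoint_left.2 fun x hx hxs => ?_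
    rw [mem_neighborFinset] at hx
    rcases mem_insert.1 hxs with rfl | hxs
    · exact hx.ne rfl
    · exact h x hxs hx
  have := card_le_univ (G.neighborFinset w ∪ insert w s)
  rw [card_union_of_disjoint hdisj, card_insert_of_notMem hw, card_neighborFinset_eq_degree] at this
  omega

end SimpleGraph

open SimpleGraph Walk in
/-- Dirac's theorem: a graph on `n ≥ 3` vertices with minimum degree at least `n/2`
is Hamiltonian. -/
theorem dirac_hamiltonian {n : ℕ} (hn : 3 ≤ n) (G : SimpleGraph (Fin n))
    [DecidableRel G.Adj] (hdeg : ∀ v : Fin n, n ≤ 2 * G.degree v) :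
    G.IsHamiltonian := by
  intro _
  have : Nonempty (Fin n) := ⟨⟨0, by omega⟩⟩
  obtain ⟨u, v, P, hP⟩ := exists_isLongestPath G
  have hu : ∀ y, G.Adj u y → y ∈ P.support := fun _ => hP.mem_support_of_adj_start
  have hv : ∀ y, G.Adj v y → y ∈ P.support := fun _ => hP.mem_support_of_adj_end
  have hPn : P.length < n := by simpa using hP.1.length_lt
  have hdeg_u : G.degree u ≤ P.length := degree_le_length_of_forall_adj_mem_support P hu
  obtain ⟨i, hi, hui, hvi⟩ :=
    exists_adj_getVert_succ_and_adj_getVert P hu hv (by linarith [hdeg u, hdeg v])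
  obtain ⟨C, hC, hClen, hCsupp⟩ :=
    hP.1.exists_isCycle_of_adj_getVert (by linarith [hdeg u]) hi hui hvi
  have hspan : ∀ w, w ∈ P.support := by
    intro w
    by_contra hw
    have := degree_add_card_lt_card_of_forall_not_adj _ (mt List.mem_toFinset.1 hw)
      fun b hb => hP.not_adj_of_isCycle hC hClen hCsupp hw (List.mem_toFinset.1 hb)
    rw [List.toFinset_card_of_nodup hP.1.support_nodup, length_support, Fintype.card_fin] at this
    linarith [hdeg w, hdeg u]
  refine ⟨u, C, isHamiltonianCycle_iff_isCycle_and_length_eq.2 ⟨hC, ?_⟩⟩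
  have := (hP.1.isHamiltonian_of_mem hspan).length_eq
  rw [Fintype.card_fin] at this ⊢
  omega
end

section
/- Let H be a hypergraph with a Berge path v_1, h_1, v_2, ..., h_{n-1}, v_n covering all n vertices. If for some index i the hyperedge h_i contains v_1, then H also contains a Berge path with defining vertex sequence v_i, v_{i-1}, ..., v_1, v_{i+1}, v_{i+2}, ..., v_n (using defining hyperedges h_{i-1},...,h_1, h_i, h_{i+1},...,h_{n-1}), i.e., a Hamiltonian Berge path ending at v_i and v_n. -/
variable {α : Type*} [Fintype α] [DecidableEq α]

/-- `v 0, e 0, v 1, …, e (n-2), v (n-1)` is a Hamiltonian Berge path of the hypergraph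
with hyperedge set `E` (where `n` is the number of vertices): the `v i` are distinct and
exhaust all vertices, the `e i` are distinct hyperedges, and `v i, v (i+1) ∈ e i`. -/
def IsHamiltonianBergePath (E : Finset (Finset α)) (v : ℕ → α) (e : ℕ → Finset α) : Prop :=
  Set.InjOn v (Set.Iio (Fintype.card α)) ∧
  (∀ a : α, ∃ i < Fintype.card α, v i = a) ∧
  Set.InjOn e (Set.Iio (Fintype.card α - 1)) ∧
  ∀ i < Fintype.card α - 1, e i ∈ E ∧ v i ∈ e i ∧ v (i + 1) ∈ e i

/-- Permutation 1 (rotation with a defining hyperedge): if a Hamiltonian Berge path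
`v 0, e 0, …, e (n-2), v (n-1)` has `v 0 ∈ e m`, then reversing the initial segment gives the
Hamiltonian Berge path `v m, e (m-1), …, v 1, e 0, v 0, e m, v (m+1), e (m+1), …, v (n-1)`. -/
theorem bergePath_rotation_defining (E : Finset (Finset α)) (v : ℕ → α) (e : ℕ → Finset α)
    (hP : IsHamiltonianBergePath E v e) (m : ℕ) (hm : m < Fintype.card α - 1)
    (hv : v 0 ∈ e m) :
    IsHamiltonianBergePath E
      (fun j => if j ≤ m then v (m - j) else v j)
      (fun j => if j < m then e (m - 1 - j) else e j) := by
  obtain ⟨hinj, hsurj, heinj, hedge⟩ := hP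
  have hmn : m < Fintype.card α := by omega
  refine ⟨?_, ?_, ?_, ?_⟩
  · intro a ha b hb hab
    simp only [Set.mem_Iio] at ha hb
    by_cases hA : a ≤ m <;> by_cases hB : b ≤ m <;> simp only [hA, hB, if_pos, if_neg,
      if_true, if_false] at hab
    · have := hinj (Set.mem_Iio.2 (by omega)) (Set.mem_Iio.2 (by omega)) hab; omega
    · have := hinj (Set.mem_Iio.2 (by omega)) (Set.mem_Iio.2 (by omega)) hab; omega
    · have := hinj (Set.mem_Iio.2 (by omega)) (Set.mem_Iio.2 (by omega)) hab; omega
    · exact hinj (Set.mem_Iio.2 (by omega)) (Set.mem_Iio.2 (by omega)) hab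
  · intro a
    obtain ⟨i, hi, hvi⟩ := hsurj a
    by_cases hA : i ≤ m
    · exact ⟨m - i, by omega, by simp only [if_pos (by omega : m - i ≤ m)]; rw [show m - (m - i) = i by omega]; exact hvi⟩
    · exact ⟨i, hi, by simp only [if_neg hA]; exact hvi⟩
  · intro a ha b hb hab
    simp only [Set.mem_Iio] at ha hb
    by_cases hA : a < m <;> by_cases hB : b < m <;> simp only [hA, hB, if_pos, if_neg,
      if_true, if_false] at hab
    · have := heinj (Set.mem_Iio.2 (by omega)) (Set.mem_Iio.2 (by omega)) hab; omega
    · have := heinj (Set.mem_Iio.2 (by omega)) (Set.mem_Iio.2 (by omega)) hab; omega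
    · have := heinj (Set.mem_Iio.2 (by omega)) (Set.mem_Iio.2 (by omega)) hab; omega
    · exact heinj (Set.mem_Iio.2 (by omega)) (Set.mem_Iio.2 (by omega)) hab
  · intro i hi
    rcases lt_trichotomy i m with hA | hA | hA
    · obtain ⟨h1, h2, h3⟩ := hedge (m - 1 - i) (by omega)
      simp only [if_pos hA, if_pos (by omega : i ≤ m), if_pos (by omega : i + 1 ≤ m)]
      refine ⟨h1, ?_, ?_⟩
      · rw [show m - i = m - 1 - i + 1 by omega]; exact h3
      · rw [show m - (i + 1) = m - 1 - i by omega]; exact h2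
    · subst hA
      obtain ⟨h1, h2, h3⟩ := hedge i hi
      simp only [lt_irrefl, if_neg, if_false, if_pos (le_refl i), if_neg (by omega : ¬ i + 1 ≤ i)]
      exact ⟨h1, by simpa using hv, h3⟩
    · obtain ⟨h1, h2, h3⟩ := hedge i hi
      simp only [if_neg (by omega : ¬ i < m), if_neg (by omega : ¬ i ≤ m),
        if_neg (by omega : ¬ i + 1 ≤ m)]
      exact ⟨h1, h2, h3⟩
end

section
/- Let H be a hypergraph with a Hamiltonian Berge path P: v_1, h_1, ..., h_{n-1}, v_n. Suppose for indices i > j we have v_1 ∈ h_i, and there is a hyperedge f of H not among h_1,...,h_{n-1} with v_j, v_{i+1} ∈ f. Then H contains a Hamiltonian Berge path v_{j+1}, h_{j+1}, ..., v_i, h_i, v_1, h_1, v_2, ..., v_j, f, v_{i+1}, h_{i+1}, ..., h_{n-1}, v_n. -/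
variable {α : Type*} [Fintype α] [DecidableEq α]

/-- Permutation 3 (with a defining hyperedge `e a` and a non-defining hyperedge `f`):
if `a > b`, `v 0 ∈ e a`, and `f ∈ E` is not a defining hyperedge with `v b, v (a+1) ∈ f`,
then `v (b+1), e (b+1), …, v a, e a, v 0, e 0, v 1, …, v b, f, v (a+1), e (a+1), …, v (n-1)`
is a Hamiltonian Berge path. -/
theorem bergePath_permutation_three (E : Finset (Finset α)) (v : ℕ → α) (e : ℕ → Finset α)
    (hP : IsHamiltonianBergePath E v e) (a b : ℕ) (hab : b < a) (ha : a < Fintype.card α - 1)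
    (hva : v 0 ∈ e a) (f : Finset α) (hf : f ∈ E)
    (hfnd : ∀ j < Fintype.card α - 1, e j ≠ f) (hvb : v b ∈ f) (hva1 : v (a + 1) ∈ f) :
    IsHamiltonianBergePath E
      (fun p => if p < a - b then v (b + 1 + p) else if p ≤ a then v (p - (a - b)) else v p)
      (fun p => if p < a - b - 1 then e (b + 1 + p)
        else if p = a - b - 1 then e a
        else if p < a then e (p - (a - b))
        else if p = a then f
        else e p) := by
  obtain ⟨hvinj, hvsurj, heinj, hedge⟩ := hP
  set n := Fintype.card α with hn
  refine ⟨?_, ?_, ?_, ?_⟩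
  · intro p hp q hq h
    simp only [Set.mem_Iio] at hp hq
    simp only at h
    split_ifs at h <;>
      (have := hvinj (Set.mem_Iio.2 (by omega)) (Set.mem_Iio.2 (by omega)) h; omega)
  · intro x
    obtain ⟨i, hi, hvi⟩ := hvsurj x
    rcases le_or_gt i b with h1 | h1
    · refine ⟨i + (a - b), by omega, ?_⟩
      simp only
      rw [if_neg (by omega), if_pos (by omega)]
      have : i + (a - b) - (a - b) = i := by omega
      rw [this]; exact hvi
    · rcases le_or_gt i a with h2 | h2
      · refine ⟨i - (b + 1), by omega, ?_⟩
        simp only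
        rw [if_pos (by omega)]
        have : b + 1 + (i - (b + 1)) = i := by omega
        rw [this]; exact hvi
      · exact ⟨i, by omega, by simp only; rw [if_neg (by omega), if_neg (by omega)]; exact hvi⟩
  · intro p hp q hq h
    simp only [Set.mem_Iio] at hp hq
    simp only at h
    split_ifs at h <;>
      first
        | omega
        | (exact absurd h (hfnd _ (by omega)))
        | (exact absurd h.symm (hfnd _ (by omega)))
        | (have := heinj (Set.mem_Iio.2 (by omega)) (Set.mem_Iio.2 (by omega)) h; omega)
  · intro p hp
    simp only
    rcases lt_trichotomy p (a - b - 1) with h1 | h1 | h1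
    · obtain ⟨hE, hv1, hv2⟩ := hedge (b + 1 + p) (by omega)
      rw [if_pos h1, if_pos (show p < a - b by omega), if_pos (show p + 1 < a - b by omega)]
      have : b + 1 + (p + 1) = b + 1 + p + 1 := by omega
      rw [this]
      exact ⟨hE, hv1, hv2⟩
    · obtain ⟨hE, hv1, _⟩ := hedge a (by omega)
      rw [if_neg (by omega), if_pos h1, if_pos (show p < a - b by omega),
        if_neg (show ¬ p + 1 < a - b by omega), if_pos (show p + 1 ≤ a by omega)]
      have e1 : b + 1 + p = a := by omega
      have e2 : p + 1 - (a - b) = 0 := by omega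
      rw [e1, e2]
      exact ⟨hE, hv1, hva⟩
    · rcases lt_trichotomy p a with h2 | h2 | h2
      · obtain ⟨hE, hv1, hv2⟩ := hedge (p - (a - b)) (by omega)
        rw [if_neg (by omega), if_neg (by omega), if_pos h2, if_neg (show ¬ p < a - b by omega),
          if_pos (show p ≤ a by omega), if_neg (show ¬ p + 1 < a - b by omega),
          if_pos (show p + 1 ≤ a by omega)]
        have : p + 1 - (a - b) = p - (a - b) + 1 := by omega
        rw [this]
        exact ⟨hE, hv1, hv2⟩
      · rw [if_neg (by omega), if_neg (by omega), if_neg (by omega), if_pos h2,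
          if_neg (show ¬ p < a - b by omega), if_pos (show p ≤ a by omega),
          if_neg (show ¬ p + 1 < a - b by omega), if_neg (show ¬ p + 1 ≤ a by omega)]
        have e1 : p - (a - b) = b := by omega
        have e2 : p + 1 = a + 1 := by omega
        rw [e1, e2]
        exact ⟨hf, hvb, hva1⟩
      · obtain ⟨hE, hv1, hv2⟩ := hedge p (by omega)
        rw [if_neg (by omega), if_neg (by omega), if_neg (by omega), if_neg (by omega),
          if_neg (show ¬ p < a - b by omega), if_neg (show ¬ p ≤ a by omega),
          if_neg (show ¬ p + 1 < a - b by omega), if_neg (show ¬ p + 1 ≤ a by omega)]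
        exact ⟨hE, hv1, hv2⟩
end

section
/- Let n > 2r > 2k > 0 and let H be the n-vertex r-uniform hypergraph whose vertex set is partitioned into V_1 of size k and V_2 of size n−k, with hyperedge set consisting of all r-subsets of V_2 together with k distinct r-sets each properly containing V_1. Then H has no Hamiltonian Berge cycle. -/
open Finset

variable {α : Type*} [Fintype α] [DecidableEq α]

/-- The hypergraph with hyperedge set `E` on the (finite) vertex type `α` has a
Hamiltonian Berge cycle: a cyclic alternating sequence of all `n` vertices and `n`
distinct hyperedges `v 0, e 0, v 1, …, v (n-1), e (n-1)` with `v i, v (i+1) ∈ e i`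
(indices mod `n`). -/
def HasHamiltonianBergeCycle (E : Finset (Finset α)) : Prop :=
  ∃ (v : ℕ → α) (e : ℕ → Finset α),
    Set.InjOn v (Set.Iio (Fintype.card α)) ∧
    (∀ a : α, ∃ i < Fintype.card α, v i = a) ∧
    Set.InjOn e (Set.Iio (Fintype.card α)) ∧
    ∀ i < Fintype.card α, e i ∈ E ∧ v i ∈ e i ∧ v ((i + 1) % Fintype.card α) ∈ e i

/-- Example 1: for n > 2r > 2k > 0, the r-uniform hypergraph whose hyperedges are all
r-subsets of V₂ together with k distinct r-sets properly containing V₁ (where V₁, V₂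
partition the n vertices, |V₁| = k) has no Hamiltonian Berge cycle. -/
theorem example1_not_hamiltonian (n r k : ℕ) (hcard : Fintype.card α = n)
    (hrn : 2 * r < n) (hkr : k < r) (hk : 0 < k)
    (V₁ V₂ : Finset α) (hdisj : Disjoint V₁ V₂) (hunion : V₁ ∪ V₂ = Finset.univ)
    (hV₁ : V₁.card = k)
    (F : Finset (Finset α)) (hF : F.card = k) (hFmem : ∀ h ∈ F, V₁ ⊂ h ∧ h.card = r) :
    ¬ HasHamiltonianBergeCycle (V₂.powersetCard r ∪ F) := by
  rintro ⟨v, e, hvinj, hvsurj, heinj, hmem⟩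
  rw [hcard] at hvinj hvsurj heinj hmem
  have hn : 0 < n := by omega
  set σ : ℕ → ℕ := fun i => (i + (n - 1)) % n with hσ
  have hσlt : ∀ i, σ i < n := fun i => Nat.mod_lt _ hn
  have hσsucc : ∀ i < n, (σ i + 1) % n = i := by
    intro i hi
    have h1 : (σ i + 1) % n = (i + (n - 1) + 1) % n := Nat.mod_add_mod _ _ _
    have h2 : i + (n - 1) + 1 = i + n := by omega
    rw [h1, h2, Nat.add_mod_right, Nat.mod_eq_of_lt hi]
  set S : Finset ℕ := (Finset.range n).filter (fun i => v i ∈ V₁) with hS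
  have hSsub : ∀ i ∈ S, i < n := by
    intro i hi
    exact Finset.mem_range.mp (Finset.mem_filter.mp hi).1
  have hSV : ∀ i ∈ S, v i ∈ V₁ := fun i hi => (Finset.mem_filter.mp hi).2
  have hScard : S.card = k := by
    rw [← hV₁]
    exact Finset.card_bij (fun i _ => v i) (fun i hi => hSV i hi)
      (fun i hi j hj hij => hvinj (Set.mem_Iio.mpr (hSsub i hi)) (Set.mem_Iio.mpr (hSsub j hj)) hij)
      (by
        intro a ha
        obtain ⟨i, hi, hvi⟩ := hvsurj a
        exact ⟨i, Finset.mem_filter.mpr ⟨Finset.mem_range.mpr hi, hvi ▸ ha⟩, hvi⟩)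
  have hedgeF : ∀ i < n, ∀ a ∈ e i, a ∈ V₁ → e i ∈ F := by
    intro i hi a hae haV
    rcases Finset.mem_union.mp (hmem i hi).1 with h | h
    · have : a ∈ V₂ := (Finset.mem_powersetCard.mp h).1 hae
      exact absurd this (Finset.disjoint_left.mp hdisj haV)
    · exact h
  set T : Finset ℕ := S ∪ S.image σ with hT
  have hTsub : ∀ i ∈ T, i < n := by
    intro i hi
    rcases Finset.mem_union.mp hi with h | h
    · exact hSsub i h
    · obtain ⟨j, _, rfl⟩ := Finset.mem_image.mp h
      exact hσlt j
  have hTF : ∀ i ∈ T, e i ∈ F := by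
    intro i hi
    rcases Finset.mem_union.mp hi with h | h
    · exact hedgeF i (hSsub i h) (v i) (hmem i (hSsub i h)).2.1 (hSV i h)
    · obtain ⟨j, hj, rfl⟩ := Finset.mem_image.mp h
      have hjn := hSsub j hj
      have hmem2 := (hmem (σ j) (hσlt j)).2.2
      rw [hσsucc j hjn] at hmem2
      exact hedgeF (σ j) (hσlt j) (v j) hmem2 (hSV j hj)
  have hTcard : T.card ≤ k := by
    rw [← hF]
    exact Finset.card_le_card_of_injOn e hTF
      (fun i hi j hj hij => heinj (Set.mem_Iio.mpr (hTsub i hi)) (Set.mem_Iio.mpr (hTsub j hj)) hij)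
  have hTS : S = T :=
    Finset.eq_of_subset_of_card_le Finset.subset_union_left (by omega)
  have hclosed : ∀ i ∈ S, σ i ∈ S := by
    intro i hi
    have : σ i ∈ T := Finset.mem_union_right _ (Finset.mem_image_of_mem σ hi)
    rwa [← hTS] at this
  obtain ⟨i0, hi0⟩ := Finset.card_pos.mp (by omega : 0 < S.card)
  have hi0n := hSsub i0 hi0
  have key : ∀ m : ℕ, (i0 + m * (n - 1)) % n ∈ S := by
    intro m
    induction m with
    | zero => simpa [Nat.mod_eq_of_lt hi0n] using hi0
    | succ m ih =>
      have := hclosed _ ih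
      have heq : σ ((i0 + m * (n - 1)) % n) = (i0 + (m + 1) * (n - 1)) % n := by
        show ((i0 + m * (n - 1)) % n + (n - 1)) % n = _
        rw [Nat.mod_add_mod]
        ring_nf
      rwa [heq] at this
  have hrange : Finset.range n ⊆ S := by
    intro j hj
    have hjn := Finset.mem_range.mp hj
    set m := i0 + (n - j) with hm
    have h1 : i0 + m * (n - 1) + m = i0 + m * n := by
      have : m * (n - 1) + m = m * n := by
        have : (n - 1) + 1 = n := by omega
        calc m * (n - 1) + m = m * ((n - 1) + 1) := by ring
        _ = m * n := by rw [this]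
      omega
    have h2 : j + m = i0 + n := by omega
    have hmodeq : i0 + m * (n - 1) + m ≡ j + m [MOD n] := by
      rw [h1, h2]
      show (i0 + m * n) % n = (i0 + n) % n
      rw [Nat.add_mul_mod_self_right, Nat.add_mod_right]
    have hmodeq2 : i0 + m * (n - 1) ≡ j [MOD n] := Nat.ModEq.add_right_cancel' m hmodeq
    have : (i0 + m * (n - 1)) % n = j := by
      have := hmodeq2
      unfold Nat.ModEq at this
      rwa [Nat.mod_eq_of_lt hjn] at this
    rw [← this]
    exact key m
  have : n ≤ S.card := by
    calc n = (Finset.range n).card := (Finset.card_range n).symm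
    _ ≤ S.card := Finset.card_le_card hrange
  omega
end

section
/- Let 3 ≤ r ≤ k < n/2 and let H be the n-vertex r-uniform hypergraph whose vertex set is partitioned into V_1, V_2, V_3 with |V_1| = |V_2| = k and |V_3| = n − 2k, and whose hyperedges are all r-subsets h such that either (h ⊆ V_1 ∪ V_2 and |h ∩ V_1| = 1) or h ⊆ V_2 ∪ V_3. Then H has no Hamiltonian Berge cycle. -/
open Finset

variable {α : Type*} [Fintype α] [DecidableEq α]

lemma card_filter_mem {α : Type*} [DecidableEq α] (N : ℕ) (v : ℕ → α) (W : Finset α)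
    (hinj : Set.InjOn v (Set.Iio N)) (hsurj : ∀ a ∈ W, ∃ i < N, v i = a) :
    ((Finset.range N).filter (fun i => v i ∈ W)).card = W.card := by
  apply Finset.card_bij (fun i _ => v i)
  · intro i hi; exact (Finset.mem_filter.mp hi).2
  · intro i hi j hj h
    exact hinj (Finset.mem_range.mp (Finset.mem_filter.mp hi).1)
      (Finset.mem_range.mp (Finset.mem_filter.mp hj).1) h
  · intro a ha
    obtain ⟨i, hi, rfl⟩ := hsurj a ha
    exact ⟨i, Finset.mem_filter.mpr ⟨Finset.mem_range.mpr hi, ha⟩, rfl⟩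

/-- Example 2: for 3 ≤ r ≤ k < n/2, the r-uniform hypergraph on V₁ ∪ V₂ ∪ V₃
(|V₁| = |V₂| = k, |V₃| = n - 2k) whose hyperedges are the r-sets h with
(h ⊆ V₁ ∪ V₂ and |h ∩ V₁| = 1) or h ⊆ V₂ ∪ V₃ has no Hamiltonian Berge cycle. -/
theorem example2_not_hamiltonian (n r k : ℕ) (hcard : Fintype.card α = n)
    (hr : 3 ≤ r) (hrk : r ≤ k) (hkn : 2 * k < n)
    (V₁ V₂ V₃ : Finset α) (h12 : Disjoint V₁ V₂) (h13 : Disjoint V₁ V₃)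
    (h23 : Disjoint V₂ V₃) (hunion : V₁ ∪ V₂ ∪ V₃ = Finset.univ)
    (hV₁ : V₁.card = k) (hV₂ : V₂.card = k) (hV₃ : V₃.card = n - 2 * k) :
    ¬ HasHamiltonianBergeCycle
      ((Finset.univ.powersetCard r).filter
        (fun h => (h ⊆ V₁ ∪ V₂ ∧ (h ∩ V₁).card = 1) ∨ h ⊆ V₂ ∪ V₃)) := by
  subst hcard
  set N := Fintype.card α with hNdef
  rintro ⟨v, e, hvinj, hvsurj, heinj, hE⟩
  have hN : 7 ≤ N := by omega
  -- edge type facts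
  have ecases : ∀ i < N, (e i ⊆ V₁ ∪ V₂ ∧ (e i ∩ V₁).card = 1) ∨ e i ⊆ V₂ ∪ V₃ := by
    intro i hi
    exact (Finset.mem_filter.mp (hE i hi).1).2
  have h12' := Finset.disjoint_left.mp h12
  have h13' := Finset.disjoint_left.mp h13
  have h23' := Finset.disjoint_left.mp h23
  have hmix : ∀ i < N, ∀ a ∈ e i, ∀ b ∈ e i, a ∈ V₁ → b ∈ V₃ → False := by
    intro i hi a ha b hb ha1 hb3
    rcases ecases i hi with ⟨hsub, _⟩ | hsub
    · rcases Finset.mem_union.mp (hsub hb) with h | h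
      · exact h13' h hb3
      · exact h23' h hb3
    · rcases Finset.mem_union.mp (hsub ha) with h | h
      · exact h12' ha1 h
      · exact h13' ha1 h
  have hmod : ∀ i < N, (i + 1) % N = if i + 1 = N then 0 else i + 1 := by
    intro i hi
    rcases Nat.lt_or_ge (i + 1) N with h | h
    · rw [if_neg (by omega), Nat.mod_eq_of_lt h]
    · have h' : i + 1 = N := by omega
      rw [if_pos h', h', Nat.mod_self]
  have hmodlt : ∀ i < N, (i + 1) % N < N := fun i hi => Nat.mod_lt _ (by omega)
  have hmodne : ∀ i < N, (i + 1) % N ≠ i := by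
    intro i hi
    rw [hmod i hi]; split <;> omega
  have hnoadj : ∀ i < N, v i ∈ V₁ → v ((i + 1) % N) ∈ V₁ → False := by
    intro i hi h1 h2
    rcases ecases i hi with ⟨_, hone⟩ | hsub
    · have hlt : 1 < (e i ∩ V₁).card := by
        apply Finset.one_lt_card.mpr
        refine ⟨v i, Finset.mem_inter.mpr ⟨(hE i hi).2.1, h1⟩,
          v ((i + 1) % N), Finset.mem_inter.mpr ⟨(hE i hi).2.2, h2⟩, ?_⟩
        intro hvv
        exact hmodne i hi (hvinj (by exact hi) (hmodlt i hi) hvv).symm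
      omega
    · rcases Finset.mem_union.mp (hsub ((hE i hi).2.1)) with h | h
      · exact h12' h1 h
      · exact h13' h1 h
  -- the shifted vertex map
  set v' : ℕ → α := fun i => v ((i + 1) % N) with hv'
  have hv'inj : Set.InjOn v' (Set.Iio N) := by
    intro i hi j hj h
    have hi' : i < N := hi
    have hj' : j < N := hj
    have := hvinj (hmodlt i hi') (hmodlt j hj') h
    rw [hmod i hi', hmod j hj'] at this
    split at this <;> split at this <;> omega
  have hv'surj : ∀ a : α, ∃ i < N, v' i = a := by
    intro a
    obtain ⟨m, hm, rfl⟩ := hvsurj a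
    refine ⟨if m = 0 then N - 1 else m - 1, by split <;> omega, ?_⟩
    simp only [hv']
    congr 1
    split
    · subst m; rw [show N - 1 + 1 = N by omega, Nat.mod_self]
    · rw [show m - 1 + 1 = m by omega, Nat.mod_eq_of_lt hm]
  -- cardinalities
  have cA1 := card_filter_mem N v V₁ hvinj (fun a _ => hvsurj a)
  have cB1 := card_filter_mem N v' V₁ hv'inj (fun a _ => hv'surj a)
  have cA3 := card_filter_mem N v V₃ hvinj (fun a _ => hvsurj a)
  have cB3 := card_filter_mem N v' V₃ hv'inj (fun a _ => hv'surj a)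
  set A1 := (Finset.range N).filter (fun i => v i ∈ V₁) with hA1
  set B1 := (Finset.range N).filter (fun i => v' i ∈ V₁) with hB1
  set A3 := (Finset.range N).filter (fun i => v i ∈ V₃) with hA3
  set B3 := (Finset.range N).filter (fun i => v' i ∈ V₃) with hB3
  set S1 := (Finset.range N).filter (fun i => v i ∈ V₁ ∨ v' i ∈ V₁) with hS1
  set S3 := (Finset.range N).filter (fun i => v i ∈ V₃ ∨ v' i ∈ V₃) with hS3
  have hS1eq : S1 = A1 ∪ B1 := by
    rw [hS1, hA1, hB1, Finset.filter_or]
  have hAB1disj : Disjoint A1 B1 := by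
    rw [Finset.disjoint_left]
    intro i hiA hiB
    have hi := Finset.mem_range.mp (Finset.mem_filter.mp hiA).1
    exact hnoadj i hi (Finset.mem_filter.mp hiA).2 (Finset.mem_filter.mp hiB).2
  have cS1 : S1.card = 2 * k := by
    rw [hS1eq, Finset.card_union_of_disjoint hAB1disj, cA1, cB1, hV₁]; ring
  have hS13disj : Disjoint S1 S3 := by
    rw [Finset.disjoint_left]
    intro i hi1 hi3
    have hi := Finset.mem_range.mp (Finset.mem_filter.mp hi1).1
    have h1 := (Finset.mem_filter.mp hi1).2
    have h3 := (Finset.mem_filter.mp hi3).2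
    obtain ⟨a, ha, ha1⟩ : ∃ a ∈ e i, a ∈ V₁ := by
      rcases h1 with h | h
      · exact ⟨v i, (hE i hi).2.1, h⟩
      · exact ⟨v' i, (hE i hi).2.2, h⟩
    obtain ⟨b, hb, hb3⟩ : ∃ b ∈ e i, b ∈ V₃ := by
      rcases h3 with h | h
      · exact ⟨v i, (hE i hi).2.1, h⟩
      · exact ⟨v' i, (hE i hi).2.2, h⟩
    exact hmix i hi a ha b hb ha1 hb3
  have hsub13 : S1 ∪ S3 ⊆ Finset.range N := by
    rw [hS1eq]
    intro i hi
    simp only [Finset.mem_union, Finset.mem_filter, hS3] at hi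
    rcases hi with (h | h) | h
    · exact (Finset.mem_filter.mp h).1
    · exact (Finset.mem_filter.mp h).1
    · exact h.1
  have cS3le : S3.card ≤ N - 2 * k := by
    have := Finset.card_le_card hsub13
    rw [Finset.card_union_of_disjoint hS13disj, cS1, Finset.card_range] at this
    omega
  have hA3S : A3 ⊆ S3 := by
    intro i hi
    exact Finset.mem_filter.mpr ⟨(Finset.mem_filter.mp hi).1, Or.inl (Finset.mem_filter.mp hi).2⟩
  have hB3S : B3 ⊆ S3 := by
    intro i hi
    exact Finset.mem_filter.mpr ⟨(Finset.mem_filter.mp hi).1, Or.inr (Finset.mem_filter.mp hi).2⟩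
  have hA3eq : A3 = S3 := Finset.eq_of_subset_of_card_le hA3S (by rw [cA3, hV₃]; exact cS3le)
  have hB3eq : B3 = S3 := Finset.eq_of_subset_of_card_le hB3S (by rw [cB3, hV₃]; exact cS3le)
  have hstep : ∀ i < N, v i ∈ V₃ → v ((i + 1) % N) ∈ V₃ := by
    intro i hi h
    have : i ∈ A3 := Finset.mem_filter.mpr ⟨Finset.mem_range.mpr hi, h⟩
    rw [hA3eq, ← hB3eq] at this
    exact (Finset.mem_filter.mp this).2
  -- get a V₃ vertex position
  have hA3ne : A3.Nonempty := by
    apply Finset.card_pos.mp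
    rw [cA3, hV₃]; omega
  obtain ⟨i0, hi0mem⟩ := hA3ne
  have hi0 : i0 < N := Finset.mem_range.mp (Finset.mem_filter.mp hi0mem).1
  have hi0V : v i0 ∈ V₃ := (Finset.mem_filter.mp hi0mem).2
  have horbit : ∀ m, v ((i0 + m) % N) ∈ V₃ := by
    intro m
    induction m with
    | zero => rwa [Nat.add_zero, Nat.mod_eq_of_lt hi0]
    | succ m ih =>
      have h1 : (i0 + m) % N < N := Nat.mod_lt _ (by omega)
      have := hstep _ h1 ih
      rwa [Nat.mod_add_mod, Nat.add_assoc] at this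
  -- get a V₁ vertex position
  have hA1ne : A1.Nonempty := by
    apply Finset.card_pos.mp
    rw [cA1, hV₁]; omega
  obtain ⟨j, hjmem⟩ := hA1ne
  have hj : j < N := Finset.mem_range.mp (Finset.mem_filter.mp hjmem).1
  have hjV : v j ∈ V₁ := (Finset.mem_filter.mp hjmem).2
  have := horbit (N - i0 + j)
  rw [show i0 + (N - i0 + j) = N + j by omega, Nat.add_mod_left, Nat.mod_eq_of_lt hj] at this
  exact h13' hjV this
end

section
/- Let n be even, 3 ≤ r < n/2, and let H be the n-vertex r-uniform hypergraph whose vertex set is partitioned into V_1 of size n/2 + 1 and V_2 of size n/2 − 1, with a fixed r-subset h' ⊆ V_1, and whose hyperedge set is all r-sets h with |h ∩ V_1| ≤ 1, together with h'. Then H has no Hamiltonian Berge cycle. -/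
open Finset

variable {α : Type*} [Fintype α] [DecidableEq α]

/-- Example 3: for n even and 3 ≤ r < n/2, the r-uniform hypergraph on V₁ ∪ V₂
(|V₁| = n/2 + 1, |V₂| = n/2 - 1) whose hyperedges are all r-sets h with |h ∩ V₁| ≤ 1,
together with one fixed r-subset h' of V₁, has no Hamiltonian Berge cycle. -/
theorem example3_not_hamiltonian (n r : ℕ) (hcard : Fintype.card α = n)
    (hn : Even n) (hr : 3 ≤ r) (hrn : 2 * r < n)
    (V₁ V₂ : Finset α) (hdisj : Disjoint V₁ V₂) (hunion : V₁ ∪ V₂ = Finset.univ)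
    (hV₁ : V₁.card = n / 2 + 1) (hV₂ : V₂.card = n / 2 - 1)
    (h' : Finset α) (hh' : h' ⊆ V₁) (hh'card : h'.card = r) :
    ¬ HasHamiltonianBergeCycle
      ((Finset.univ.powersetCard r).filter (fun h => (h ∩ V₁).card ≤ 1) ∪ {h'}) := by
  classical
  rintro ⟨v, e, hvinj, hvsurj, heinj, hcyc⟩
  rw [hcard] at hvinj hvsurj heinj hcyc
  have hn7 : 7 ≤ n := by omega
  have hmodlt : ∀ i : ℕ, (i + 1) % n < n := fun i => Nat.mod_lt _ (by omega)
  have hinj1 : ∀ i < n, ∀ j < n, (i + 1) % n = (j + 1) % n → i = j := by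
    intro i hi j hj h
    have h2 : i % n = j % n := Nat.ModEq.add_right_cancel' 1 h
    rwa [Nat.mod_eq_of_lt hi, Nat.mod_eq_of_lt hj] at h2
  have hne : ∀ i < n, v i ≠ v ((i + 1) % n) := by
    intro i hi hEq
    have h0 : i = (i + 1) % n :=
      hvinj (Set.mem_Iio.mpr hi) (Set.mem_Iio.mpr (hmodlt i)) hEq
    have h1 : i % n = (i + 1) % n := by rw [Nat.mod_eq_of_lt hi]; exact h0
    have h2 : n ∣ (i + 1) - i := (Nat.modEq_iff_dvd' (by omega)).mp h1
    have h3 : n ∣ 1 := by simpa using h2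
    have : n = 1 := Nat.dvd_one.mp h3
    omega
  set S : Finset ℕ := (Finset.range n).filter (fun i => v i ∈ V₁) with hS
  set S' : Finset ℕ := (Finset.range n).filter (fun i => v ((i + 1) % n) ∈ V₁) with hS'
  have hScard : S.card = V₁.card := by
    apply Finset.card_bij (fun i _ => v i)
    · intro i hi
      simp only [hS, Finset.mem_filter, Finset.mem_range] at hi
      exact hi.2
    · intro i hi j hj hij
      simp only [hS, Finset.mem_filter, Finset.mem_range] at hi hj
      exact hvinj (Set.mem_Iio.mpr hi.1) (Set.mem_Iio.mpr hj.1) hij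
    · intro a ha
      obtain ⟨i, hi, hvi⟩ := hvsurj a
      exact ⟨i, by simp only [hS, Finset.mem_filter, Finset.mem_range]; exact ⟨hi, hvi ▸ ha⟩, hvi⟩
  have hS'card : S'.card = S.card := by
    apply Finset.card_bij (fun i _ => (i + 1) % n)
    · intro i hi
      simp only [hS', Finset.mem_filter, Finset.mem_range] at hi
      simp only [hS, Finset.mem_filter, Finset.mem_range]
      exact ⟨hmodlt i, hi.2⟩
    · intro i hi j hj hij
      simp only [hS', Finset.mem_filter, Finset.mem_range] at hi hj
      exact hinj1 i hi.1 j hj.1 hij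
    · intro j hj
      simp only [hS, Finset.mem_filter, Finset.mem_range] at hj
      obtain ⟨hjn, hjv⟩ := hj
      refine ⟨if j = 0 then n - 1 else j - 1, ?_, ?_⟩
      · have hmod : ((if j = 0 then n - 1 else j - 1) + 1) % n = j := by
          split
          · rw [Nat.sub_add_cancel (by omega), Nat.mod_self]; omega
          · rw [Nat.sub_add_cancel (by omega)]; exact Nat.mod_eq_of_lt hjn
        simp only [hS', Finset.mem_filter, Finset.mem_range]
        constructor
        · split <;> omega
        · rw [hmod]; exact hjv
      · have hmod : ((if j = 0 then n - 1 else j - 1) + 1) % n = j := by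
          split
          · rw [Nat.sub_add_cancel (by omega), Nat.mod_self]; omega
          · rw [Nat.sub_add_cancel (by omega)]; exact Nat.mod_eq_of_lt hjn
        exact hmod
  have hunionle : (S ∪ S').card ≤ n := by
    have : S ∪ S' ⊆ Finset.range n := by
      intro i hi
      rcases Finset.mem_union.mp hi with h | h <;>
        simp only [hS, hS', Finset.mem_filter] at h <;> exact h.1
    simpa using Finset.card_le_card this
  have hintcard : 2 ≤ (S ∩ S').card := by
    have h := Finset.card_inter_add_card_union S S'
    have h2 : n % 2 = 0 := Nat.even_iff.mp hn
    omega
  obtain ⟨i, hi, j, hj, hij⟩ := Finset.one_lt_card.mp (by omega : 1 < (S ∩ S').card)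
  have hkey : ∀ k ∈ S ∩ S', e k = h' := by
    intro k hk
    simp only [hS, hS', Finset.mem_inter, Finset.mem_filter, Finset.mem_range] at hk
    obtain ⟨⟨hkn, h1⟩, _, h2⟩ := hk
    obtain ⟨heE, hv1, hv2⟩ := hcyc k hkn
    rcases Finset.mem_union.mp heE with hmem | hmem
    · exfalso
      have hsub : ({v k, v ((k + 1) % n)} : Finset α) ⊆ e k ∩ V₁ := by
        intro x hx
        simp only [Finset.mem_insert, Finset.mem_singleton] at hx
        rcases hx with rfl | rfl <;> exact Finset.mem_inter.mpr ⟨by assumption, by assumption⟩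
      have h2le : 2 ≤ (e k ∩ V₁).card := by
        have hc : ({v k, v ((k + 1) % n)} : Finset α).card = 2 := by
          rw [Finset.card_insert_of_notMem (by simp [hne k hkn]), Finset.card_singleton]
        calc 2 = ({v k, v ((k + 1) % n)} : Finset α).card := hc.symm
          _ ≤ _ := Finset.card_le_card hsub
      have := (Finset.mem_filter.mp hmem).2
      omega
    · simpa using hmem
  have hei : e i = h' := hkey i hi
  have hej : e j = h' := hkey j hj
  have hiS : i ∈ S := (Finset.mem_inter.mp hi).1
  have hjS : j ∈ S := (Finset.mem_inter.mp hj).1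
  simp only [hS, Finset.mem_filter, Finset.mem_range] at hiS hjS
  exact hij (heinj (Set.mem_Iio.mpr hiS.1) (Set.mem_Iio.mpr hjS.1) (hei.trans hej.symm))
end

section
/- Let H be a hypergraph on vertex set {v_1, ..., v_n} with a Hamiltonian Berge path P: v_1, h_1, ..., h_{n-1}, v_n, and suppose H has no Hamiltonian Berge cycle. Then there is no index i such that both: some hyperedge of H not used by P contains {v_i, v_n}, and some hyperedge of H not used by P (distinct from the previous one) contains {v_{i+1}, v_1}. -/
open Finset

variable {α : Type*} [Fintype α] [DecidableEq α]

/-- If a hypergraph with a Hamiltonian Berge path `v 0, e 0, …, e (n-2), v (n-1)` has no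
Hamiltonian Berge cycle, then there is no index i such that some non-defining hyperedge
contains both v i and v (n-1) while another (distinct) non-defining hyperedge contains
both v (i+1) and v 0. -/
theorem no_crossing_nondefining_edges (E : Finset (Finset α)) (v : ℕ → α) (e : ℕ → Finset α)
    (hP : IsHamiltonianBergePath E v e) (hnc : ¬ HasHamiltonianBergeCycle E) :
    ¬ ∃ i, i + 1 < Fintype.card α ∧ ∃ f g, f ∈ E ∧ g ∈ E ∧ f ≠ g ∧
      (∀ j < Fintype.card α - 1, e j ≠ f) ∧ (∀ j < Fintype.card α - 1, e j ≠ g) ∧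
      v i ∈ f ∧ v (Fintype.card α - 1) ∈ f ∧ v (i + 1) ∈ g ∧ v 0 ∈ g := by
  rintro ⟨i, hi, f, g, hfE, hgE, hfg, hfne, hgne, hvif, hvnf, hvig, hv0g⟩
  obtain ⟨hvinj, hvsurj, heinj, hedge⟩ := hP
  set n := Fintype.card α with hn
  apply hnc
  refine ⟨fun j => if j ≤ i then v j else v (n + i - j),
    fun j => if j < i then e j else if j = i then f else if j = n - 1 then g
      else e (n + i - j - 1), ?_, ?_, ?_, ?_⟩
  · intro j hj k hk hjk
    simp only [Set.mem_Iio, ← hn] at hj hk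
    beta_reduce at hjk
    split_ifs at hjk with h1 h2 h2
    · exact hvinj (Set.mem_Iio.2 (show j < n by omega))
        (Set.mem_Iio.2 (show k < n by omega)) hjk
    · have := hvinj (Set.mem_Iio.2 (show j < n by omega))
        (Set.mem_Iio.2 (show n + i - k < n by omega)) hjk
      omega
    · have := hvinj (Set.mem_Iio.2 (show n + i - j < n by omega))
        (Set.mem_Iio.2 (show k < n by omega)) hjk
      omega
    · have := hvinj (Set.mem_Iio.2 (show n + i - j < n by omega))
        (Set.mem_Iio.2 (show n + i - k < n by omega)) hjk
      omega
  · intro a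
    obtain ⟨k, hk, rfl⟩ := hvsurj a
    by_cases hki : k ≤ i
    · exact ⟨k, by omega, by simp [hki]⟩
    · refine ⟨n + i - k, by omega, ?_⟩
      beta_reduce
      rw [if_neg (show ¬ n + i - k ≤ i by omega)]
      congr 1
      omega
  · intro j hj k hk hjk
    simp only [Set.mem_Iio, ← hn] at hj hk
    beta_reduce at hjk
    split_ifs at hjk with h1 h2 h3 h4 h5 h6 h7 h8 h9 h10 h11 h12 <;>
      first
      | omega
      | (exact absurd hjk hfg)
      | (exact absurd hjk.symm hfg)
      | (exact absurd hjk (hfne _ (by omega)))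
      | (exact absurd hjk.symm (hfne _ (by omega)))
      | (exact absurd hjk (hgne _ (by omega)))
      | (exact absurd hjk.symm (hgne _ (by omega)))
      | (have := heinj (Set.mem_Iio.2 (show _ < n - 1 by omega))
          (Set.mem_Iio.2 (show _ < n - 1 by omega)) hjk; omega)
  · intro j hj
    rw [← hn] at hj ⊢
    beta_reduce
    rcases lt_trichotomy j i with h1 | h1 | h1
    · have hje : j < n - 1 := by omega
      obtain ⟨h2, h3, h4⟩ := hedge j hje
      have hm : (j + 1) % n = j + 1 := Nat.mod_eq_of_lt (by omega)
      rw [if_pos h1, hm, if_pos (by omega : j ≤ i), if_pos (by omega : j + 1 ≤ i)]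
      exact ⟨h2, h3, h4⟩
    · subst h1
      have hm : (j + 1) % n = j + 1 := Nat.mod_eq_of_lt (by omega)
      rw [if_neg (lt_irrefl j), if_pos rfl, hm, if_pos le_rfl, if_neg (by omega : ¬ j + 1 ≤ j)]
      have h2 : n + j - (j + 1) = n - 1 := by omega
      rw [h2]
      exact ⟨hfE, hvif, hvnf⟩
    · by_cases h2 : j = n - 1
      · subst h2
        have hm : (n - 1 + 1) % n = 0 := by
          have h3 : n - 1 + 1 = n := by omega
          rw [h3, Nat.mod_self]
        rw [if_neg (by omega), if_neg (by omega), if_pos rfl, hm,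
          if_neg (by omega : ¬ n - 1 ≤ i), if_pos (Nat.zero_le i)]
        have h3 : n + i - (n - 1) = i + 1 := by omega
        rw [h3]
        exact ⟨hgE, hvig, hv0g⟩
      · have hm : (j + 1) % n = j + 1 := Nat.mod_eq_of_lt (by omega)
        set m := n + i - j - 1 with hmdef
        have hml : m < n - 1 := by omega
        obtain ⟨h3, h4, h5⟩ := hedge m hml
        rw [if_neg (by omega), if_neg (by omega), if_neg h2, hm,
          if_neg (by omega : ¬ j ≤ i), if_neg (by omega : ¬ j + 1 ≤ i)]
        have e1 : n + i - j = m + 1 := by omega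
        have e2 : n + i - (j + 1) = m := by omega
        rw [e1, e2]
        exact ⟨h3, h5, h4⟩
end
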